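/- arXiv:1311.5774 — 2 statements merged into one kernel-verified Lean document; each statement's English description precedes it below -/
import Mathlib

section
/- Let f(x) = exp(x − eˣ) be the standard Gumbel density and X a random variable with density f. Let ψ₂ = f''/f and ψ₃ = f'''/f. Then E[ψ₂(X)ψ₃(X)] = −13. -/
/-! Every derivative of the Gumbel density `f(x) = exp(x − eˣ)` is `f` times a polynomial in
`eˣ`: since `f' = (1 − eˣ) f`, differentiating `g(eˣ) f(x)` gives `(u g'(u) + (1 − u) g(u)) f(x)`
at `u = eˣ`. Hence `ψ₂ ψ₃ = p(eˣ)` with `p = (1 − 3u + u²)(1 − 7u + 6u² − u³)`, and the substitution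
`u = eˣ` turns `∫ p(eˣ) f(x) dx` into `∫₀^∞ p(u) e^{−u} du = Σ pₖ k!` by `Γ(k + 1) = k!`. -/

open MeasureTheory Real Set

lemma hasDerivAt_gumbel (x : ℝ) :
    HasDerivAt (fun x => exp (x - exp x)) ((1 - exp x) * exp (x - exp x)) x := by
  simpa [mul_comm] using ((hasDerivAt_id x).sub (hasDerivAt_exp x)).exp

lemma deriv_comp_exp_mul_gumbel {g g' h : ℝ → ℝ} (hg : ∀ u, HasDerivAt g (g' u) u)
    (hh : ∀ u, u * g' u + (1 - u) * g u = h u) :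
    deriv (fun x => g (exp x) * exp (x - exp x)) = fun x => h (exp x) * exp (x - exp x) := by
  funext x
  refine (((hg _).comp x (hasDerivAt_exp x)).mul (hasDerivAt_gumbel x)).deriv.trans ?_
  rw [← hh, Function.comp_apply]
  ring

lemma integral_comp_exp_mul_gumbel (g : ℝ → ℝ) :
    ∫ x, g (exp x) * exp (x - exp x) = ∫ u in Ioi 0, exp (-u) * g u := by
  have h := integral_image_eq_integral_abs_deriv_smul MeasurableSet.univ
    (fun x _ => (hasDerivAt_exp x).hasDerivWithinAt) exp_injective.injOn
    (fun u => exp (-u) * g u)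
  rw [image_univ, range_exp] at h
  rw [h, setIntegral_univ]
  congr 1 with x
  rw [abs_of_pos (exp_pos x), smul_eq_mul, sub_eq_add_neg, exp_add]
  ring

lemma integrableOn_exp_neg_mul_pow (n : ℕ) :
    IntegrableOn (fun u : ℝ => exp (-u) * u ^ n) (Ioi 0) := by
  simpa [rpow_natCast] using GammaIntegral_convergent (s := (n : ℝ) + 1) (by positivity)

lemma integral_exp_neg_mul_pow (n : ℕ) :
    ∫ u in Ioi (0 : ℝ), exp (-u) * u ^ n = n.factorial := by
  rw [← Gamma_nat_eq_factorial, Gamma_eq_integral (by positivity)]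
  simp [rpow_natCast]

lemma integral_exp_neg_mul_sum_pow {n : ℕ} (c : Fin n → ℝ) :
    ∫ u in Ioi (0 : ℝ), exp (-u) * ∑ i, c i * u ^ (i : ℕ) = ∑ i, c i * (i : ℕ).factorial := by
  simp_rw [Finset.mul_sum, mul_left_comm (exp _)]
  rw [integral_finsetSum _ fun (i : Fin n) _ => (integrableOn_exp_neg_mul_pow i).const_mul (c i)]
  simp_rw [integral_const_mul, integral_exp_neg_mul_pow]

/-- For the standard Gumbel density `f(x) = exp(x − eˣ)`, `ψ₂ = f''/f` and `ψ₃ = f'''/f`,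
`E[ψ₂(X)ψ₃(X)] = −13`. -/
theorem gumbel_psi2_psi3_moment
    (f : ℝ → ℝ) (hf : f = fun x => exp (x - exp x)) :
    ∫ x, (deriv (deriv f) x / f x) * (deriv (deriv (deriv f)) x / f x) * f x = -13 := by
  subst hf
  have hd1 : deriv (fun x => exp (x - exp x)) = fun x => (1 - exp x) * exp (x - exp x) :=
    funext fun x => (hasDerivAt_gumbel x).deriv
  have hd2 : deriv (deriv (fun x => exp (x - exp x))) =
      fun x => (1 - 3 * exp x + exp x ^ 2) * exp (x - exp x) := by
    rw [hd1]
    exact deriv_comp_exp_mul_gumbel (g := fun u => 1 - u) (h := fun u => 1 - 3 * u + u ^ 2)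
      (fun u => (hasDerivAt_id u).const_sub 1) fun u => by ring
  have hd3 : deriv (deriv (deriv (fun x => exp (x - exp x)))) =
      fun x => (1 - 7 * exp x + 6 * exp x ^ 2 - exp x ^ 3) * exp (x - exp x) := by
    rw [hd2]
    exact deriv_comp_exp_mul_gumbel (g := fun u => 1 - 3 * u + u ^ 2)
      (h := fun u => 1 - 7 * u + 6 * u ^ 2 - u ^ 3)
      (fun u => (((hasDerivAt_id u).const_mul 3).const_sub 1).add ((hasDerivAt_id u).pow 2))
      fun u => by simp only [id_eq]; ring
  have hexpand : ∀ u : ℝ, (1 - 3 * u + u ^ 2) * (1 - 7 * u + 6 * u ^ 2 - u ^ 3) =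
      ∑ i : Fin 6, ![1, -10, 28, -26, 9, -1] i * u ^ (i : ℕ) := by
    intro u
    simp only [Fin.sum_univ_six, Matrix.cons_val, Fin.coe_ofNat_eq_mod, Nat.reduceMod]
    ring
  rw [hd3, hd2]
  simp only [mul_div_cancel_right₀ _ (exp_pos _).ne']
  rw [integral_comp_exp_mul_gumbel (fun u => (1 - 3 * u + u ^ 2) * (1 - 7 * u + 6 * u ^ 2 - u ^ 3))]
  simp_rw [hexpand, integral_exp_neg_mul_sum_pow]
  simp only [Fin.sum_univ_six, Matrix.cons_val, Fin.coe_ofNat_eq_mod, Nat.reduceMod]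
  norm_num [Nat.factorial]
end

section
/- Let f(x) = exp(x − eˣ) be the standard Gumbel density, X with density f, ψ₁ = f'/f, ψ₂ = f''/f, I = E[ψ₁²], η₂ = E[ψ₂²]/I², η₃ = E[ψ₁³]/I^{3/2}, η₄ = E[ψ₁⁴]/I². Then η₃² = 4η₂ − (4/3)η₄ − 4, i.e., the Cauchy–Schwarz inequality η₃²/4 ≤ η₂ − η₄/3 − 1 is attained with equality for the Gumbel distribution. -/
/-!
Substituting `t = eˣ` turns the Gumbel law into the standard exponential law, and the two score
functions become polynomials in `t`: `ψ₁ = f'/f = 1 - t` and `ψ₂ = f''/f = (1 - t)² - t`. Every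
integral in the theorem is therefore a combination of the exponential moments `∫ tᵏ e⁻ᵗ = k!`,
which gives `I = 1`, `η₂ = 5`, `η₃ = -2`, `η₄ = 9`.
-/

open MeasureTheory Real Set

lemma integrableOn_pow_mul_exp_neg_Ioi (n : ℕ) :
    IntegrableOn (fun t : ℝ => t ^ n * exp (-t)) (Ioi 0) := by
  have h := GammaIntegral_convergent (s := n + 1) (by positivity)
  rw [add_sub_cancel_right] at h
  refine h.congr_fun (fun t _ => ?_) measurableSet_Ioi
  simp only [rpow_natCast, mul_comm]

lemma integral_pow_mul_exp_neg_Ioi (n : ℕ) :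
    ∫ t in Ioi (0 : ℝ), t ^ n * exp (-t) = n.factorial := by
  rw [← Gamma_nat_eq_factorial, Gamma_eq_integral (by positivity), add_sub_cancel_right]
  refine setIntegral_congr_fun measurableSet_Ioi (fun t _ => ?_)
  rw [rpow_natCast, mul_comm]

lemma integral_polynomial_mul_exp_neg_Ioi {n : ℕ} (c : Fin n → ℝ) :
    ∫ t in Ioi (0 : ℝ), (∑ i, c i * t ^ (i : ℕ)) * exp (-t) =
      ∑ i, c i * (i : ℕ).factorial := by
  simp_rw [Finset.sum_mul, mul_assoc]
  rw [integral_finsetSum _ fun (i : Fin n) _ =>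
    (integrableOn_pow_mul_exp_neg_Ioi i).const_mul (c i)]
  simp_rw [integral_const_mul, integral_pow_mul_exp_neg_Ioi]

noncomputable def gumbelDensity (x : ℝ) : ℝ := exp (x - exp x)

lemma integral_comp_exp_mul_gumbelDensity (g : ℝ → ℝ) :
    ∫ x, g (exp x) * gumbelDensity x = ∫ t in Ioi 0, g t * exp (-t) := by
  have h := integral_image_eq_integral_abs_deriv_smul MeasurableSet.univ
    (fun x _ => (hasDerivAt_exp x).hasDerivWithinAt) exp_injective.injOn
    (fun t => g t * exp (-t))
  rw [image_univ, range_exp, Measure.restrict_univ] at h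
  rw [h]
  refine integral_congr_ae (Filter.Eventually.of_forall fun x => ?_)
  simp only [gumbelDensity, smul_eq_mul, abs_of_pos (exp_pos x), exp_sub, exp_neg]
  field_simp

lemma integral_polynomial_exp_mul_gumbelDensity {n : ℕ} (g : ℝ → ℝ) (c : Fin n → ℝ)
    (hg : ∀ t, g t = ∑ i, c i * t ^ (i : ℕ)) :
    ∫ x, g (exp x) * gumbelDensity x = ∑ i, c i * (i : ℕ).factorial := by
  rw [integral_comp_exp_mul_gumbelDensity, ← integral_polynomial_mul_exp_neg_Ioi]
  simp_rw [hg]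

lemma hasDerivAt_gumbelDensity (x : ℝ) :
    HasDerivAt gumbelDensity ((1 - exp x) * gumbelDensity x) x := by
  refine ((hasDerivAt_id x).sub (hasDerivAt_exp x)).exp.congr_deriv ?_
  simp only [gumbelDensity, Pi.sub_apply, id, mul_comm]

lemma deriv_gumbelDensity :
    deriv gumbelDensity = fun x => (1 - exp x) * gumbelDensity x :=
  funext fun x => (hasDerivAt_gumbelDensity x).deriv

lemma deriv_deriv_gumbelDensity :
    deriv (deriv gumbelDensity) = fun x => ((1 - exp x) ^ 2 - exp x) * gumbelDensity x := by
  rw [deriv_gumbelDensity]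
  refine funext fun x => HasDerivAt.deriv ?_
  refine (((hasDerivAt_const x 1).sub (hasDerivAt_exp x)).mul
    (hasDerivAt_gumbelDensity x)).congr_deriv ?_
  simp only [Pi.sub_apply]
  ring

lemma gumbelDensity_ne_zero (x : ℝ) : gumbelDensity x ≠ 0 := exp_ne_zero _

lemma deriv_gumbelDensity_div (x : ℝ) : deriv gumbelDensity x / gumbelDensity x = 1 - exp x := by
  rw [deriv_gumbelDensity, mul_div_cancel_right₀ _ (gumbelDensity_ne_zero x)]

lemma deriv_deriv_gumbelDensity_div (x : ℝ) :
    deriv (deriv gumbelDensity) x / gumbelDensity x = (1 - exp x) ^ 2 - exp x := by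
  rw [deriv_deriv_gumbelDensity, mul_div_cancel_right₀ _ (gumbelDensity_ne_zero x)]

lemma integral_one_sub_exp_sq_mul_gumbelDensity :
    ∫ x, (1 - exp x) ^ 2 * gumbelDensity x = 1 := by
  rw [integral_polynomial_exp_mul_gumbelDensity (fun t => (1 - t) ^ 2) ![1, -2, 1]
    fun t => by
      simp only [Fin.sum_univ_succ, Fin.sum_univ_zero, Matrix.cons_val_zero,
        Matrix.cons_val_succ, Fin.val_zero, Fin.val_succ]
      ring]
  norm_num [Fin.sum_univ_succ, Nat.factorial]

lemma integral_one_sub_exp_pow_three_mul_gumbelDensity :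
    ∫ x, (1 - exp x) ^ 3 * gumbelDensity x = -2 := by
  rw [integral_polynomial_exp_mul_gumbelDensity (fun t => (1 - t) ^ 3) ![1, -3, 3, -1]
    fun t => by
      simp only [Fin.sum_univ_succ, Fin.sum_univ_zero, Matrix.cons_val_zero,
        Matrix.cons_val_succ, Fin.val_zero, Fin.val_succ]
      ring]
  norm_num [Fin.sum_univ_succ, Nat.factorial]

lemma integral_one_sub_exp_pow_four_mul_gumbelDensity :
    ∫ x, (1 - exp x) ^ 4 * gumbelDensity x = 9 := by
  rw [integral_polynomial_exp_mul_gumbelDensity (fun t => (1 - t) ^ 4) ![1, -4, 6, -4, 1]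
    fun t => by
      simp only [Fin.sum_univ_succ, Fin.sum_univ_zero, Matrix.cons_val_zero,
        Matrix.cons_val_succ, Fin.val_zero, Fin.val_succ]
      ring]
  norm_num [Fin.sum_univ_succ, Nat.factorial]

lemma integral_one_sub_exp_sq_sub_exp_sq_mul_gumbelDensity :
    ∫ x, ((1 - exp x) ^ 2 - exp x) ^ 2 * gumbelDensity x = 5 := by
  rw [integral_polynomial_exp_mul_gumbelDensity (fun t => ((1 - t) ^ 2 - t) ^ 2)
    ![1, -6, 11, -6, 1]
    fun t => by
      simp only [Fin.sum_univ_succ, Fin.sum_univ_zero, Matrix.cons_val_zero,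
        Matrix.cons_val_succ, Fin.val_zero, Fin.val_succ]
      ring]
  norm_num [Fin.sum_univ_succ, Nat.factorial]

/-- For the standard Gumbel density the Cauchy–Schwarz inequality for the eta-cumulants
is attained with equality: `η₃² = 4η₂ − (4/3)η₄ − 4`. -/
theorem gumbel_eta_cauchy_schwarz_equality
    (f : ℝ → ℝ) (hf : f = fun x => exp (x - exp x))
    (I η₂ η₃ η₄ : ℝ)
    (hI : I = ∫ x, (deriv f x / f x) ^ 2 * f x)
    (hη₂ : η₂ = (∫ x, (deriv (deriv f) x / f x) ^ 2 * f x) / I ^ 2)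
    (hη₃ : η₃ = (∫ x, (deriv f x / f x) ^ 3 * f x) / I ^ ((3 : ℝ) / 2))
    (hη₄ : η₄ = (∫ x, (deriv f x / f x) ^ 4 * f x) / I ^ 2) :
    η₃ ^ 2 = 4 * η₂ - (4 / 3) * η₄ - 4 := by
  obtain rfl : f = gumbelDensity := hf
  simp_rw [deriv_gumbelDensity_div, deriv_deriv_gumbelDensity_div] at hI hη₂ hη₃ hη₄
  rw [integral_one_sub_exp_sq_mul_gumbelDensity] at hI
  rw [hI, integral_one_sub_exp_sq_sub_exp_sq_mul_gumbelDensity] at hη₂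
  rw [hI, integral_one_sub_exp_pow_three_mul_gumbelDensity] at hη₃
  rw [hI, integral_one_sub_exp_pow_four_mul_gumbelDensity] at hη₄
  rw [hη₂, hη₃, hη₄]
  norm_num
end
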